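/- arXiv:2009.10303 — 2 statements merged into one kernel-verified Lean document; each statement's English description precedes it below -/
import Mathlib

section
/- The function g(ξ) = log(2^ξ + 1)/log(2) satisfies |log(g(ξ))| ≤ |ξ| for all ξ ∈ ℝ. -/
/-- The modified soft-plus function `g(ξ) = log(2^ξ + 1) / log 2`. -/
noncomputable def softg (ξ : ℝ) : ℝ := Real.log ((2 : ℝ) ^ ξ + 1) / Real.log 2

/-- `|log(g(ξ))| ≤ |ξ|` for all `ξ ∈ ℝ`. -/
theorem log_softg_bound (ξ : ℝ) : |Real.log (softg ξ)| ≤ |ξ| := by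
  have hlog2 : (0 : ℝ) < Real.log 2 := Real.log_pos one_lt_two
  have hlog2le : Real.log 2 ≤ 1 := by
    have := Real.log_le_sub_one_of_pos (show (0:ℝ) < 2 by norm_num)
    linarith
  set t : ℝ := (2 : ℝ) ^ ξ with ht
  have ht0 : 0 < t := Real.rpow_pos_of_pos (by norm_num) ξ
  have hteq : t = Real.exp (ξ * Real.log 2) := by
    rw [ht, Real.rpow_def_of_pos (by norm_num), mul_comm]
  have hg0 : 0 < softg ξ := by
    apply div_pos _ hlog2
    apply Real.log_pos; linarith
  rw [abs_le]
  rcases le_or_gt 0 ξ with hξ | hξ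
  · -- ξ ≥ 0 : 1 ≤ t
    have ht1 : (1 : ℝ) ≤ t := Real.one_le_rpow one_le_two hξ
    constructor
    · -- -|ξ| ≤ log g : g ≥ 1
      have hg1 : (1 : ℝ) ≤ softg ξ := by
        rw [softg, le_div_iff₀ hlog2, one_mul]
        apply Real.log_le_log (by norm_num)
        linarith
      have : 0 ≤ Real.log (softg ξ) := Real.log_nonneg hg1
      have : -|ξ| ≤ 0 := neg_nonpos.mpr (abs_nonneg ξ)
      linarith
    · -- log g ≤ |ξ| : g ≤ exp ξ
      rw [abs_of_nonneg hξ, Real.log_le_iff_le_exp hg0]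
      have h1 : (1 : ℝ) + t ≤ (2 : ℝ) ^ t := by
        have := one_add_mul_self_le_rpow_one_add (s := 1) (by norm_num) ht1
        simpa [mul_one, one_add_one_eq_two] using this
      have h2 : Real.log (t + 1) ≤ t * Real.log 2 := by
        calc Real.log (t + 1) ≤ Real.log ((2:ℝ) ^ t) := by
              apply Real.log_le_log (by linarith); linarith
          _ = t * Real.log 2 := Real.log_rpow (by norm_num) t
      have h3 : softg ξ ≤ t := by
        rw [softg, div_le_iff₀ hlog2]; exact h2
      have h4 : t ≤ Real.exp ξ := by
        rw [hteq]; apply Real.exp_le_exp.mpr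
        nlinarith
      linarith
  · -- ξ < 0 : t ≤ 1
    have ht1 : t ≤ 1 := Real.rpow_le_one_of_one_le_of_nonpos one_le_two hξ.le
    constructor
    · -- -|ξ| ≤ log g : exp ξ ≤ g
      rw [abs_of_neg hξ, neg_neg, Real.le_log_iff_exp_le hg0]
      have h1 : (2 : ℝ) ^ t ≤ 1 + t := by
        have := rpow_one_add_le_one_add_mul_self (s := 1) (by norm_num) ht0.le ht1
        simpa [mul_one, one_add_one_eq_two] using this
      have h2 : t * Real.log 2 ≤ Real.log (t + 1) := by
        calc t * Real.log 2 = Real.log ((2:ℝ) ^ t) := (Real.log_rpow (by norm_num) t).symm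
          _ ≤ Real.log (t + 1) := by
              apply Real.log_le_log (Real.rpow_pos_of_pos (by norm_num) t); linarith
      have h3 : t ≤ softg ξ := by
        rw [softg, le_div_iff₀ hlog2]; exact h2
      have h4 : Real.exp ξ ≤ t := by
        rw [hteq]; apply Real.exp_le_exp.mpr
        nlinarith
      linarith
    · -- log g ≤ |ξ| : g ≤ 1
      have hg1 : softg ξ ≤ 1 := by
        rw [softg, div_le_iff₀ hlog2, one_mul]
        apply Real.log_le_log (by linarith)
        linarith
      have := Real.log_nonpos hg0.le hg1
      have : 0 ≤ |ξ| := abs_nonneg ξ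
      linarith
end

section
/- Let ρ : (0,∞) → (0,∞) be a measurable weight with B := sup_{x>0} (∫_x^∞ ρ(t) dt)^{1/2} (∫_0^x ρ(t)^{-1} dt)^{1/2} < ∞. Then there exists a constant C < ∞ such that for all measurable u with ∫_0^∞ u(x)² ρ(x) dx < ∞, the inequality ∫_0^∞ (∫_0^x u(t) dt)² ρ(x) dx ≤ C ∫_0^∞ u(x)² ρ(x) dx holds. -/
open MeasureTheory Set ENNReal

/-!
Write `W x = ∫₀ˣ ρ⁻¹` and `R x = ∫ₓ^∞ ρ`, so that the hypothesis reads `R W ≤ B`. Cauchy–Schwarz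
against the weight `ρ W^{1/2}` gives
`(∫₀ˣ |u|)² ≤ (∫₀ˣ u² ρ W^{1/2}) (∫₀ˣ ρ⁻¹ W^{-1/2}) ≤ 2 W(x)^{1/2} ∫₀ˣ u² ρ W^{1/2}`.
Integrating against `ρ` and exchanging the order of integration leaves the tail `∫ₜ^∞ ρ W^{1/2}`,
and `W ≤ B / R` turns it into `B^{1/2} ∫ₜ^∞ ρ R^{-1/2} ≤ 2 B^{1/2} R(t)^{1/2} ≤ 2 B W(t)^{-1/2}`;
altogether the constant is `4 B`.

Both instances of `∫ dW / √W ≤ 2 √W` hold for an arbitrary measure `ν` on the line, with no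
regularity of `W t = ν (Iic t)`: the push-forward of `ν` under `W` gives `[0, r)` mass at most `r`,
i.e. `ν {t | W t < r} ≤ r`, and the layer-cake formula then bounds `∫ W ^ (-1/2) dν` by the case
where `W` pushes `ν` forward to Lebesgue measure on `[0, ν univ]`.
-/

theorem measure_setOf_measure_Iic_lt_le (μ : Measure ℝ) (r : ℝ≥0∞) :
    μ {t | μ (Iic t) < r} ≤ r := by
  set S := {t | μ (Iic t) < r}
  have hS : IsLowerSet S := fun a b hba ha => (measure_mono (Iic_subset_Iic.2 hba)).trans_lt ha
  by_cases hmax : ∃ τ ∈ S, ∀ s ∈ S, s ≤ τ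
  · obtain ⟨τ, hτ, hle⟩ := hmax
    exact (measure_mono hle).trans hτ.le
  push Not at hmax
  have hSq : S = ⋃ q : {q : ℚ // (q : ℝ) ∈ S}, Iic (q : ℝ) := by
    refine Subset.antisymm (fun y hy => ?_) (iUnion_subset fun q => fun y hy => hS hy q.2)
    obtain ⟨s, hs, hys⟩ := hmax y hy
    obtain ⟨q, hyq, hqs⟩ := exists_rat_btwn hys
    exact mem_iUnion.2 ⟨⟨q, hS hqs.le hs⟩, hyq.le⟩
  have hmono : Monotone fun q : {q : ℚ // (q : ℝ) ∈ S} => Iic (q : ℝ) :=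
    fun a b hab => Iic_subset_Iic.2 (Rat.cast_le.2 hab)
  rw [hSq, hmono.directed_le.measure_iUnion]
  exact iSup_le fun q => q.2.le

theorem measure_setOf_measure_Ici_lt_le (μ : Measure ℝ) (r : ℝ≥0∞) :
    μ {t | μ (Ici t) < r} ≤ r := by
  have h := measure_setOf_measure_Iic_lt_le (μ.map (MeasurableEquiv.neg ℝ)) r
  simp only [MeasurableEquiv.map_apply] at h
  convert h using 3 with t
  simp

theorem setLIntegral_Ioi_le_of_le_const_of_le_rpow_neg_two {F : ℝ → ℝ≥0∞} {m : ℝ} (hm : 0 < m)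
    (hFm : ∀ s > 0, F s ≤ ENNReal.ofReal m) (hF : ∀ s > 0, F s ≤ ENNReal.ofReal (s ^ (-2 : ℝ))) :
    ∫⁻ s in Ioi 0, F s ≤ 2 * ENNReal.ofReal √m := by
  -- split at the crossover point `c` where `m = c ^ (-2)`
  set c := (√m)⁻¹
  have hc : 0 < c := inv_pos.2 (Real.sqrt_pos.2 hm)
  have htail : ∫ s in Ioi c, s ^ (-2 : ℝ) = √m := by
    rw [integral_Ioi_rpow_of_lt (by norm_num) hc]
    norm_num [c, Real.rpow_neg_one]
  calc ∫⁻ s in Ioi 0, F s = (∫⁻ s in Ioc 0 c, F s) + ∫⁻ s in Ioi c, F s := by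
        rw [← Ioc_union_Ioi_eq_Ioi hc.le,
          lintegral_union measurableSet_Ioi (Ioc_disjoint_Ioi le_rfl)]
    _ ≤ (∫⁻ _ in Ioc 0 c, ENNReal.ofReal m) + ∫⁻ s in Ioi c, ENNReal.ofReal (s ^ (-2 : ℝ)) :=
        add_le_add (setLIntegral_mono' measurableSet_Ioc fun s hs => hFm s hs.1)
          (setLIntegral_mono' measurableSet_Ioi fun s hs => hF s (hc.trans hs))
    _ = ENNReal.ofReal (m * c) + ENNReal.ofReal √m := by
        rw [setLIntegral_const, Real.volume_Ioc, sub_zero, ← ENNReal.ofReal_mul hm.le, ← htail,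
          ofReal_integral_eq_lintegral_ofReal (integrableOn_Ioi_rpow_of_lt (by norm_num) hc)
            ((ae_restrict_iff' measurableSet_Ioi).2 (.of_forall fun s hs =>
              Real.rpow_nonneg (hc.trans hs).le _))]
    _ = 2 * ENNReal.ofReal √m := by
        rw [← div_eq_mul_inv, Real.div_sqrt]
        ring

theorem lintegral_rpow_neg_half_le_of_measure_lt_le {α : Type*} [MeasurableSpace α]
    {μ : Measure α} {h : α → ℝ≥0∞} (hh : AEMeasurable h μ) (H : ∀ r, μ {a | h a < r} ≤ r) :
    ∫⁻ a, h a ^ (-(2⁻¹ : ℝ)) ∂μ ≤ 2 * μ univ ^ (2⁻¹ : ℝ) := by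
  rcases eq_or_ne (μ univ) 0 with hM0 | hM0
  · simp [Measure.measure_univ_eq_zero.mp hM0]
  rcases eq_or_ne (μ univ) ⊤ with hMtop | hMtop
  · simp [hMtop]
  have hne : ∀ᵐ a ∂μ, h a ≠ 0 := by
    refine measure_eq_zero_iff_ae_notMem.1 (nonpos_iff_eq_zero.1 ?_)
    refine ENNReal.le_of_forall_pos_le_add fun ε hε _ => ?_
    rw [zero_add]
    exact (measure_mono fun a (ha : h a = 0) => show h a < ε by simp [ha, hε]).trans (H ε)
  set f : α → ℝ := fun a => (h a ^ (-(2⁻¹ : ℝ))).toReal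
  have hf : ∀ a, h a ≠ 0 → ENNReal.ofReal (f a) = h a ^ (-(2⁻¹ : ℝ)) := fun a ha =>
    ENNReal.ofReal_toReal (by simp [ENNReal.rpow_eq_top_iff, ha])
  have hlevel : ∀ s > 0, {a | s < f a} ⊆ {a | h a < ENNReal.ofReal (s ^ (-2 : ℝ))} := by
    intro s hs a (ha : s < f a)
    have hne : h a ^ (-(2⁻¹ : ℝ)) ≠ ⊤ := fun htop => by simp [f, htop] at ha; linarith
    have hlt := (ENNReal.ofReal_lt_iff_lt_toReal hs.le hne).2 ha
    rw [ENNReal.rpow_neg, ENNReal.lt_inv_iff_lt_inv, ENNReal.rpow_inv_lt_iff two_pos] at hlt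
    rwa [← ENNReal.ofReal_rpow_of_pos hs, ENNReal.rpow_neg, ← ENNReal.inv_rpow]
  calc ∫⁻ a, h a ^ (-(2⁻¹ : ℝ)) ∂μ = ∫⁻ a, ENNReal.ofReal (f a) ∂μ :=
        lintegral_congr_ae (hne.mono fun a ha => (hf a ha).symm)
    _ = ∫⁻ s in Ioi 0, μ {a | s < f a} :=
        lintegral_eq_lintegral_meas_lt μ (.of_forall fun _ => toReal_nonneg)
          (hh.pow_const _).ennreal_toReal
    _ ≤ 2 * ENNReal.ofReal √(μ univ).toReal :=
        setLIntegral_Ioi_le_of_le_const_of_le_rpow_neg_two (toReal_pos hM0 hMtop)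
          (fun s _ => by rw [ofReal_toReal hMtop]; exact measure_mono (subset_univ _))
          fun s hs => (measure_mono (hlevel s hs)).trans (H _)
    _ = 2 * μ univ ^ (2⁻¹ : ℝ) := by
        rw [Real.sqrt_eq_rpow, ← ENNReal.ofReal_rpow_of_nonneg toReal_nonneg (by norm_num),
          ofReal_toReal hMtop, one_div]

theorem setLIntegral_Iic_measure_Iic_rpow_neg_half_le (μ : Measure ℝ) (x : ℝ) :
    ∫⁻ t in Iic x, μ (Iic t) ^ (-(2⁻¹ : ℝ)) ∂μ ≤ 2 * μ (Iic x) ^ (2⁻¹ : ℝ) := by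
  have hmono : Monotone fun t => μ (Iic t) := fun a b hab => measure_mono (Iic_subset_Iic.2 hab)
  simpa using lintegral_rpow_neg_half_le_of_measure_lt_le hmono.measurable.aemeasurable
    fun r => (Measure.restrict_apply_le _ _).trans (measure_setOf_measure_Iic_lt_le μ r)

theorem setLIntegral_Ici_measure_Ici_rpow_neg_half_le (μ : Measure ℝ) (x : ℝ) :
    ∫⁻ t in Ici x, μ (Ici t) ^ (-(2⁻¹ : ℝ)) ∂μ ≤ 2 * μ (Ici x) ^ (2⁻¹ : ℝ) := by
  have hanti : Antitone fun t => μ (Ici t) := fun a b hab => measure_mono (Ici_subset_Ici.2 hab)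
  simpa using lintegral_rpow_neg_half_le_of_measure_lt_le hanti.measurable.aemeasurable
    fun r => (Measure.restrict_apply_le _ _).trans (measure_setOf_measure_Ici_lt_le μ r)

theorem setLIntegral_Iic_mul_rpow_neg_half_le (μ : Measure ℝ) {ψ : ℝ → ℝ≥0∞}
    (hψ : Measurable ψ) (x : ℝ) :
    ∫⁻ t in Iic x, ψ t * (∫⁻ s in Iic t, ψ s ∂μ) ^ (-(2⁻¹ : ℝ)) ∂μ ≤
      2 * (∫⁻ s in Iic x, ψ s ∂μ) ^ (2⁻¹ : ℝ) := by
  have hmono : Monotone fun t => ∫⁻ s in Iic t, ψ s ∂μ :=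
    fun a b hab => lintegral_mono_set (Iic_subset_Iic.2 hab)
  have h := setLIntegral_Iic_measure_Iic_rpow_neg_half_le (μ.withDensity ψ) x
  simp only [withDensity_apply _ measurableSet_Iic] at h
  rwa [restrict_withDensity measurableSet_Iic,
    lintegral_withDensity_eq_lintegral_mul _ hψ (hmono.measurable.pow_const _)] at h

theorem setLIntegral_Ici_mul_rpow_neg_half_le (μ : Measure ℝ) {ψ : ℝ → ℝ≥0∞}
    (hψ : Measurable ψ) (x : ℝ) :
    ∫⁻ t in Ici x, ψ t * (∫⁻ s in Ici t, ψ s ∂μ) ^ (-(2⁻¹ : ℝ)) ∂μ ≤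
      2 * (∫⁻ s in Ici x, ψ s ∂μ) ^ (2⁻¹ : ℝ) := by
  have hanti : Antitone fun t => ∫⁻ s in Ici t, ψ s ∂μ :=
    fun a b hab => lintegral_mono_set (Ici_subset_Ici.2 hab)
  have h := setLIntegral_Ici_measure_Ici_rpow_neg_half_le (μ.withDensity ψ) x
  simp only [withDensity_apply _ measurableSet_Ici] at h
  rwa [restrict_withDensity measurableSet_Ici,
    lintegral_withDensity_eq_lintegral_mul _ hψ (hanti.measurable.pow_const _)] at h

theorem lintegral_sq_le_lintegral_sq_mul_mul_lintegral_inv {α : Type*} [MeasurableSpace α]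
    {μ : Measure α} {f a : α → ℝ≥0∞} (hf : AEMeasurable f μ) (ha : AEMeasurable a μ)
    (ha0 : ∀ᵐ x ∂μ, a x ≠ 0) (hatop : ∀ᵐ x ∂μ, a x ≠ ⊤) :
    (∫⁻ x, f x ∂μ) ^ 2 ≤ (∫⁻ x, f x ^ 2 * a x ∂μ) * ∫⁻ x, (a x)⁻¹ ∂μ := by
  set F := fun x => f x * a x ^ (2⁻¹ : ℝ)
  set G := fun x => (a x ^ (2⁻¹ : ℝ))⁻¹
  have hfFG : ∀ᵐ x ∂μ, f x = (F * G) x := by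
    filter_upwards [ha0, hatop] with x hx0 hxtop
    simp only [Pi.mul_apply, F, G, mul_assoc]
    rw [ENNReal.mul_inv_cancel (by simp [hx0, hxtop]) (by simp [hx0, hxtop]), mul_one]
  have hF : ∀ x, F x ^ (2 : ℝ) = f x ^ 2 * a x := fun x => by
    rw [ENNReal.mul_rpow_of_nonneg _ _ zero_le_two, ← ENNReal.rpow_mul]
    norm_num
  have hG : ∀ x, G x ^ (2 : ℝ) = (a x)⁻¹ := fun x => by
    rw [ENNReal.inv_rpow, ← ENNReal.rpow_mul]
    norm_num
  have hsq : ∀ y : ℝ≥0∞, (y ^ (1 / 2 : ℝ)) ^ 2 = y := fun y => by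
    rw [← ENNReal.rpow_natCast, ← ENNReal.rpow_mul]
    norm_num
  calc (∫⁻ x, f x ∂μ) ^ 2 = (∫⁻ x, (F * G) x ∂μ) ^ 2 := by rw [lintegral_congr_ae hfFG]
    _ ≤ ((∫⁻ x, F x ^ (2 : ℝ) ∂μ) ^ (1 / 2 : ℝ) * (∫⁻ x, G x ^ (2 : ℝ) ∂μ) ^ (1 / 2 : ℝ)) ^ 2 := by
        gcongr
        exact ENNReal.lintegral_mul_le_Lp_mul_Lq μ .two_two
          (hf.mul (ha.pow_const _)) (ha.pow_const _).inv
    _ = (∫⁻ x, f x ^ 2 * a x ∂μ) * ∫⁻ x, (a x)⁻¹ ∂μ := by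
        simp only [mul_pow, hsq, hF, hG]

theorem lintegral_setLIntegral_Iic_mul (μ : Measure ℝ) [SFinite μ] {g h : ℝ → ℝ≥0∞}
    (hg : Measurable g) (hh : Measurable h) :
    ∫⁻ x, (∫⁻ t in Iic x, g t ∂μ) * h x ∂μ = ∫⁻ t, g t * ∫⁻ x in Ici t, h x ∂μ ∂μ := by
  have hmeas : Measurable (Function.uncurry fun x t => (Iic x).indicator (fun t => g t * h x) t) :=
    ((hg.comp measurable_snd).mul (hh.comp measurable_fst)).indicator
      (measurableSet_le measurable_snd measurable_fst)
  calc ∫⁻ x, (∫⁻ t in Iic x, g t ∂μ) * h x ∂μ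
      = ∫⁻ x, ∫⁻ t, (Iic x).indicator (fun t => g t * h x) t ∂μ ∂μ := by
        simp_rw [lintegral_indicator measurableSet_Iic, lintegral_mul_const _ hg]
    _ = ∫⁻ t, ∫⁻ x, (Ici t).indicator (fun x => g t * h x) x ∂μ ∂μ :=
        lintegral_lintegral_swap hmeas.aemeasurable
    _ = ∫⁻ t, g t * ∫⁻ x in Ici t, h x ∂μ ∂μ := by
        simp_rw [lintegral_indicator measurableSet_Ici, lintegral_const_mul _ hh]

theorem setLIntegral_ne_zero {α : Type*} [MeasurableSpace α] {μ : Measure α} {f : α → ℝ≥0∞}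
    {s : Set α} (hf : Measurable f) (hμs : μ s ≠ 0) (hfs : ∀ x ∈ s, f x ≠ 0) :
    ∫⁻ x in s, f x ∂μ ≠ 0 :=
  ((setLIntegral_pos_iff hf).2 <| by
    rwa [inter_eq_right.2 (show s ⊆ Function.support f from hfs), pos_iff_ne_zero]).ne'

theorem ENNReal.rpow_le_rpow_mul_rpow_neg_of_mul_le {a b c : ℝ≥0∞} {p : ℝ} (hp : 0 ≤ p) (hb : b ≠ 0)
    (hc : c ≠ ⊤) (h : a * b ≤ c) : a ^ p ≤ c ^ p * b ^ (-p) := by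
  calc a ^ p ≤ (c / b) ^ p :=
        ENNReal.rpow_le_rpow ((ENNReal.le_div_iff_mul_le (.inl hb) (.inr hc)).2 h) hp
    _ = c ^ p * b ^ (-p) := by
        rw [ENNReal.div_rpow_of_nonneg _ _ hp, div_eq_mul_inv, ENNReal.rpow_neg]

namespace Hardy

noncomputable def invIntegral (φ : ℝ → ℝ≥0∞) (x : ℝ) : ℝ≥0∞ := ∫⁻ t in Ioc 0 x, (φ t)⁻¹

variable {φ : ℝ → ℝ≥0∞}

theorem invIntegral_mono (φ : ℝ → ℝ≥0∞) : Monotone (invIntegral φ) :=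
  fun _ _ hab => lintegral_mono_set (Ioc_subset_Ioc_right hab)

theorem invIntegral_ne_zero (hφ : Measurable φ) (hφtop : ∀ t > 0, φ t ≠ ⊤) {x : ℝ}
    (hx : 0 < x) : invIntegral φ x ≠ 0 :=
  setLIntegral_ne_zero hφ.inv (by simp [hx]) fun t ht => ENNReal.inv_ne_zero.2 (hφtop t ht.1)

theorem setLIntegral_Ioc_inv_mul_invIntegral_rpow_le (hφ : Measurable φ) (x : ℝ) :
    ∫⁻ t in Ioc 0 x, (φ t)⁻¹ * invIntegral φ t ^ (-(2⁻¹ : ℝ)) ≤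
      2 * invIntegral φ x ^ (2⁻¹ : ℝ) := by
  have h := setLIntegral_Iic_mul_rpow_neg_half_le (volume.restrict (Ioi 0)) hφ.inv x
  simp only [Measure.restrict_restrict measurableSet_Iic, Iic_inter_Ioi, Pi.inv_apply] at h
  exact h

theorem sq_setLIntegral_Ioc_le {f : ℝ → ℝ≥0∞} (hφ : Measurable φ) (hf : Measurable f)
    (hφ0 : ∀ t > 0, φ t ≠ 0) (hφtop : ∀ t > 0, φ t ≠ ⊤) {x : ℝ} (hx : invIntegral φ x ≠ ⊤) :
    (∫⁻ t in Ioc 0 x, f t) ^ 2 ≤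
      (∫⁻ t in Ioc 0 x, f t ^ 2 * (φ t * invIntegral φ t ^ (2⁻¹ : ℝ))) *
        (2 * invIntegral φ x ^ (2⁻¹ : ℝ)) := by
  have hW : ∀ t ∈ Ioc 0 x, invIntegral φ t ≠ 0 ∧ invIntegral φ t ≠ ⊤ := fun t ht =>
    ⟨invIntegral_ne_zero hφ hφtop ht.1, ne_top_of_le_ne_top hx (invIntegral_mono φ ht.2)⟩
  have hinv : ∀ t ∈ Ioc 0 x, (φ t * invIntegral φ t ^ (2⁻¹ : ℝ))⁻¹ =
      (φ t)⁻¹ * invIntegral φ t ^ (-(2⁻¹ : ℝ)) := fun t ht => by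
    rw [ENNReal.mul_inv (.inl (hφ0 t ht.1)) (.inl (hφtop t ht.1)), ENNReal.rpow_neg]
  refine (lintegral_sq_le_lintegral_sq_mul_mul_lintegral_inv
    (a := fun t => φ t * invIntegral φ t ^ (2⁻¹ : ℝ)) hf.aemeasurable
    (hφ.mul ((invIntegral_mono φ).measurable.pow_const _)).aemeasurable ?_ ?_).trans ?_
  · filter_upwards [ae_restrict_mem measurableSet_Ioc] with t ht
    exact mul_ne_zero (hφ0 t ht.1)
      (ENNReal.rpow_pos (pos_iff_ne_zero.2 (hW t ht).1) (hW t ht).2).ne'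
  · filter_upwards [ae_restrict_mem measurableSet_Ioc] with t ht
    exact ENNReal.mul_ne_top (hφtop t ht.1)
      (ENNReal.rpow_ne_top_of_nonneg (by norm_num) (hW t ht).2)
  · gcongr
    rw [setLIntegral_congr_fun measurableSet_Ioc hinv]
    exact setLIntegral_Ioc_inv_mul_invIntegral_rpow_le hφ x

theorem invIntegral_ne_top (hφ : Measurable φ) (hφ0 : ∀ t > 0, φ t ≠ 0) {B : ℝ≥0∞} (hB : B ≠ ⊤)
    (hmuck : ∀ x > 0, (∫⁻ t in Ioi x, φ t) * invIntegral φ x ≤ B) {x : ℝ} (hx : 0 < x) :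
    invIntegral φ x ≠ ⊤ := fun hWx => by
  have hR0 : ∫⁻ t in Ioi x, φ t ≠ 0 :=
    setLIntegral_ne_zero hφ (by simp) fun t ht => hφ0 t (hx.trans ht)
  have h := hmuck x hx
  rw [hWx, ENNReal.mul_top hR0, top_le_iff] at h
  exact hB h

theorem rpow_mul_setLIntegral_Ici_mul_invIntegral_rpow_le (hφ : Measurable φ)
    (hφ0 : ∀ t > 0, φ t ≠ 0) {B : ℝ≥0∞} (hB : B ≠ ⊤)
    (hmuck : ∀ x > 0, (∫⁻ t in Ioi x, φ t) * invIntegral φ x ≤ B) {t : ℝ} (ht : 0 < t) :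
    invIntegral φ t ^ (2⁻¹ : ℝ) * ∫⁻ x in Ici t, φ x * invIntegral φ x ^ (2⁻¹ : ℝ) ≤ 2 * B := by
  set R := fun x => ∫⁻ s in Ici x, φ s
  have hR : ∀ x > 0, R x * invIntegral φ x ≤ B := fun x hx => by
    simpa only [R, setLIntegral_congr Ioi_ae_eq_Ici] using hmuck x hx
  have hR0 : ∀ x > 0, R x ≠ 0 := fun x hx =>
    setLIntegral_ne_zero hφ (by simp) fun s hs => hφ0 s (hx.trans_le hs)
  have hBB : B ^ (2⁻¹ : ℝ) * B ^ (2⁻¹ : ℝ) = B := by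
    rw [← sq]
    exact_mod_cast ENNReal.rpow_inv_natCast_pow two_ne_zero B
  set w := invIntegral φ t ^ (2⁻¹ : ℝ)
  calc w * ∫⁻ x in Ici t, φ x * invIntegral φ x ^ (2⁻¹ : ℝ)
      ≤ w * ∫⁻ x in Ici t, B ^ (2⁻¹ : ℝ) * (φ x * R x ^ (-(2⁻¹ : ℝ))) := by
        gcongr w * ?_
        refine setLIntegral_mono' measurableSet_Ici fun x hx => ?_
        rw [mul_left_comm]
        gcongr
        exact rpow_le_rpow_mul_rpow_neg_of_mul_le (by norm_num) (hR0 x (ht.trans_le hx)) hB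
          ((mul_comm _ _).trans_le (hR x (ht.trans_le hx)))
    _ = B ^ (2⁻¹ : ℝ) * w * ∫⁻ x in Ici t, φ x * R x ^ (-(2⁻¹ : ℝ)) := by
        rw [lintegral_const_mul' _ _ (ENNReal.rpow_ne_top_of_nonneg (by norm_num) hB)]
        ring
    _ ≤ B ^ (2⁻¹ : ℝ) * w * (2 * R t ^ (2⁻¹ : ℝ)) := by
        gcongr
        exact setLIntegral_Ici_mul_rpow_neg_half_le volume hφ t
    _ = 2 * B ^ (2⁻¹ : ℝ) * (R t * invIntegral φ t) ^ (2⁻¹ : ℝ) := by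
        rw [ENNReal.mul_rpow_of_nonneg _ _ (by norm_num)]
        ring
    _ ≤ 2 * B ^ (2⁻¹ : ℝ) * B ^ (2⁻¹ : ℝ) := by
        gcongr
        exact hR t ht
    _ = 2 * B := by rw [mul_assoc, hBB]

theorem lintegral_sq_setLIntegral_Ioc_mul_le {f : ℝ → ℝ≥0∞} (hφ : Measurable φ)
    (hf : Measurable f) (hφ0 : ∀ t > 0, φ t ≠ 0) (hφtop : ∀ t > 0, φ t ≠ ⊤) {B : ℝ≥0∞}
    (hB : B ≠ ⊤) (hmuck : ∀ x > 0, (∫⁻ t in Ioi x, φ t) * (∫⁻ t in Ioc 0 x, (φ t)⁻¹) ≤ B) :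
    ∫⁻ x in Ioi 0, (∫⁻ t in Ioc 0 x, f t) ^ 2 * φ x ≤ 4 * B * ∫⁻ x in Ioi 0, f x ^ 2 * φ x := by
  set W := invIntegral φ
  set A := fun x => φ x * W x ^ (2⁻¹ : ℝ)
  have hA : Measurable A := hφ.mul ((invIntegral_mono φ).measurable.pow_const _)
  calc ∫⁻ x in Ioi 0, (∫⁻ t in Ioc 0 x, f t) ^ 2 * φ x
      ≤ ∫⁻ x in Ioi 0, 2 * ((∫⁻ t in Ioc 0 x, f t ^ 2 * A t) * A x) :=
        setLIntegral_mono' measurableSet_Ioi fun x hx => by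
          calc (∫⁻ t in Ioc 0 x, f t) ^ 2 * φ x
              ≤ (∫⁻ t in Ioc 0 x, f t ^ 2 * A t) * (2 * W x ^ (2⁻¹ : ℝ)) * φ x := by
                gcongr
                exact sq_setLIntegral_Ioc_le hφ hf hφ0 hφtop (invIntegral_ne_top hφ hφ0 hB hmuck hx)
            _ = 2 * ((∫⁻ t in Ioc 0 x, f t ^ 2 * A t) * A x) := by ring
    _ = 2 * ∫⁻ t in Ioi 0, f t ^ 2 * A t * ∫⁻ x in Ici t, A x ∂volume.restrict (Ioi 0) := by
        rw [lintegral_const_mul' _ _ ofNat_ne_top,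
          ← lintegral_setLIntegral_Iic_mul (g := fun t => f t ^ 2 * A t) _
            ((hf.pow_const 2).mul hA) hA]
        simp only [Measure.restrict_restrict measurableSet_Iic, Iic_inter_Ioi]
    _ ≤ 2 * ∫⁻ t in Ioi 0, f t ^ 2 * φ t * (2 * B) := by
        gcongr 2 * ?_
        refine setLIntegral_mono' measurableSet_Ioi fun t (ht : 0 < t) => ?_
        calc f t ^ 2 * A t * ∫⁻ x in Ici t, A x ∂volume.restrict (Ioi 0)
            ≤ f t ^ 2 * A t * ∫⁻ x in Ici t, A x := by
              gcongr
              exact Measure.restrict_le_self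
          _ = f t ^ 2 * φ t * (W t ^ (2⁻¹ : ℝ) * ∫⁻ x in Ici t, A x) := by
              simp only [A]
              ring
          _ ≤ f t ^ 2 * φ t * (2 * B) :=
              mul_le_mul_right
                (rpow_mul_setLIntegral_Ici_mul_invIntegral_rpow_le hφ hφ0 hB hmuck ht) _
    _ = 4 * B * ∫⁻ x in Ioi 0, f x ^ 2 * φ x := by
        rw [lintegral_mul_const' _ _ (mul_ne_top ofNat_ne_top hB)]
        ring

end Hardy

theorem ENNReal.ofReal_sq_mul (a b : ℝ) :
    ENNReal.ofReal (a ^ 2 * b) = ‖a‖ₑ ^ 2 * ENNReal.ofReal b := by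
  rw [ENNReal.ofReal_mul (sq_nonneg a), ← sq_abs, ENNReal.ofReal_pow (abs_nonneg a),
    Real.enorm_eq_ofReal_abs]

/-- Sufficiency direction of Muckenhoupt's weighted Hardy inequality on `(0,∞)`:
if `B := sup_{x>0} (∫_x^∞ ρ)^{1/2} (∫_0^x ρ⁻¹)^{1/2} < ∞`, then there is a constant
`C < ∞` such that `∫_0^∞ (∫_0^x u)² ρ ≤ C ∫_0^∞ u² ρ` for all square-integrable `u`. -/
theorem muckenhoupt_hardy_inequality (ρ : ℝ → ℝ)
    (hρmeas : Measurable ρ) (hρpos : ∀ x > (0 : ℝ), 0 < ρ x)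
    (B : ℝ≥0∞) (hB : B < ⊤)
    (hmuck : ∀ x > (0 : ℝ),
      (∫⁻ t in Ioi x, ENNReal.ofReal (ρ t)) *
        (∫⁻ t in Ioc (0 : ℝ) x, ENNReal.ofReal ((ρ t)⁻¹)) ≤ B) :
    ∃ C : ℝ≥0∞, C < ⊤ ∧ ∀ u : ℝ → ℝ, Measurable u →
      (∫⁻ x in Ioi (0 : ℝ), ENNReal.ofReal (u x ^ 2 * ρ x)) < ⊤ →
      (∫⁻ x in Ioi (0 : ℝ), ENNReal.ofReal ((∫ t in Ioc (0 : ℝ) x, u t) ^ 2 * ρ x)) ≤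
        C * ∫⁻ x in Ioi (0 : ℝ), ENNReal.ofReal (u x ^ 2 * ρ x) := by
  refine ⟨4 * B, mul_lt_top ofNat_lt_top hB, fun u hu _ => ?_⟩
  have hmuck' : ∀ x > 0, (∫⁻ t in Ioi x, ENNReal.ofReal (ρ t)) *
      (∫⁻ t in Ioc 0 x, (ENNReal.ofReal (ρ t))⁻¹) ≤ B := fun x hx => by
    rw [setLIntegral_congr_fun measurableSet_Ioc fun t ht =>
      (ENNReal.ofReal_inv_of_pos (hρpos t ht.1)).symm]
    exact hmuck x hx
  calc ∫⁻ x in Ioi 0, ENNReal.ofReal ((∫ t in Ioc 0 x, u t) ^ 2 * ρ x)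
      ≤ ∫⁻ x in Ioi 0, (∫⁻ t in Ioc 0 x, ‖u t‖ₑ) ^ 2 * ENNReal.ofReal (ρ x) :=
        lintegral_mono fun x => by
          rw [ofReal_sq_mul]
          gcongr
          exact enorm_integral_le_lintegral_enorm _
    _ ≤ 4 * B * ∫⁻ x in Ioi 0, ‖u x‖ₑ ^ 2 * ENNReal.ofReal (ρ x) :=
        Hardy.lintegral_sq_setLIntegral_Ioc_mul_le hρmeas.ennreal_ofReal hu.enorm
          (fun t ht => (ENNReal.ofReal_pos.2 (hρpos t ht)).ne') (fun _ _ => ofReal_ne_top)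
          hB.ne hmuck'
    _ = 4 * B * ∫⁻ x in Ioi 0, ENNReal.ofReal (u x ^ 2 * ρ x) := by
        simp only [ofReal_sq_mul]
end
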